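/- arXiv:2506.20114 — 2 statements merged into one kernel-verified Lean document; each statement's English description precedes it below -/
import Mathlib

section
/- The function f(α, A) = α^T A^{-1} α, defined on pairs (α, A) where α ∈ ℝ^n and A is an n×n symmetric positive definite matrix, is jointly convex in (α, A). -/
open Matrix

lemma smul_posDef {n : ℕ} {c : ℝ} (hc : 0 < c) {A : Matrix (Fin n) (Fin n) ℝ}
    (hA : A.PosDef) : (c • A).PosDef := by
  refine ⟨?_, fun x hx => ?_⟩
  · unfold Matrix.IsHermitian
    rw [conjTranspose_smul, hA.1]
    simp
  · exact (hA.smul hc).2 hx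

lemma smul_posSemidef {n : ℕ} {c : ℝ} (hc : 0 ≤ c) {A : Matrix (Fin n) (Fin n) ℝ}
    (hA : A.PosSemidef) : (c • A).PosSemidef := by
  refine ⟨?_, fun x => ?_⟩
  · unfold Matrix.IsHermitian
    rw [conjTranspose_smul, hA.1]
    simp
  · exact (hA.smul hc).2 x

/-- key inequality: 2 xᵀα − xᵀAx ≤ αᵀA⁻¹α for PosDef symmetric A. -/
lemma key {n : ℕ} {A : Matrix (Fin n) (Fin n) ℝ} (hs : A.IsSymm) (hA : A.PosDef)
    (x α : Fin n → ℝ) :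
    2 * (x ⬝ᵥ α) - x ⬝ᵥ A *ᵥ x ≤ α ⬝ᵥ A⁻¹ *ᵥ α := by
  have hinv : A * A⁻¹ = 1 := mul_nonsing_inv A hA.det_pos.ne'.isUnit
  set y := x - A⁻¹ *ᵥ α with hy
  have h0 : 0 ≤ y ⬝ᵥ A *ᵥ y := by simpa using hA.posSemidef.re_dotProduct_nonneg y
  have hAinvsymm : (A⁻¹)ᵀ = A⁻¹ := by rw [transpose_nonsing_inv, hs]
  have hAα : A *ᵥ (A⁻¹ *ᵥ α) = α := by rw [mulVec_mulVec, hinv, one_mulVec]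
  have expand : y ⬝ᵥ A *ᵥ y = x ⬝ᵥ A *ᵥ x - 2 * (x ⬝ᵥ α) + α ⬝ᵥ A⁻¹ *ᵥ α := by
    rw [hy]
    rw [mulVec_sub, sub_dotProduct, dotProduct_sub, dotProduct_sub, hAα]
    have h1 : (A⁻¹ *ᵥ α) ⬝ᵥ A *ᵥ x = α ⬝ᵥ x := by
      rw [dotProduct_mulVec (A⁻¹ *ᵥ α) A x, ← mulVec_transpose, mulVec_mulVec,
        hs.eq, hinv, one_mulVec]
    have h2 : x ⬝ᵥ α = α ⬝ᵥ x := dotProduct_comm _ _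
    have h3 : (A⁻¹ *ᵥ α) ⬝ᵥ α = α ⬝ᵥ A⁻¹ *ᵥ α := dotProduct_comm _ _
    rw [h1, h2, h3]; ring
  linarith [h0, expand.le]

/-- `f(α, A) = αᵀ A⁻¹ α` is jointly convex on `ℝⁿ × S^n_{++}`. -/
theorem stmt1 (n : ℕ) :
    ConvexOn ℝ {p : (Fin n → ℝ) × Matrix (Fin n) (Fin n) ℝ | p.2.IsSymm ∧ p.2.PosDef}
      (fun p => p.1 ⬝ᵥ (p.2⁻¹).mulVec p.1) := by
  have hconv : Convex ℝ {p : (Fin n → ℝ) × Matrix (Fin n) (Fin n) ℝ | p.2.IsSymm ∧ p.2.PosDef} := by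
    rintro ⟨α₁, A₁⟩ ⟨hs₁, hd₁⟩ ⟨α₂, A₂⟩ ⟨hs₂, hd₂⟩ a b ha hb hab
    refine ⟨?_, ?_⟩
    · show (a • A₁ + b • A₂).IsSymm
      unfold Matrix.IsSymm
      rw [transpose_add, transpose_smul, transpose_smul, hs₁.eq, hs₂.eq]
    · show (a • A₁ + b • A₂).PosDef
      rcases ha.lt_or_eq with ha' | ha'
      · exact (smul_posDef ha' hd₁).add_posSemidef (smul_posSemidef hb hd₂.posSemidef)
      · have hb1 : b = 1 := by linarith
        simpa [← ha', hb1] using hd₂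
  refine ⟨hconv, ?_⟩
  rintro ⟨α₁, A₁⟩ ⟨hs₁, hd₁⟩ ⟨α₂, A₂⟩ ⟨hs₂, hd₂⟩ a b ha hb hab
  obtain ⟨hsS, hdS⟩ := hconv ⟨hs₁, hd₁⟩ ⟨hs₂, hd₂⟩ ha hb hab
  set A : Matrix (Fin n) (Fin n) ℝ := a • A₁ + b • A₂ with hA
  set α : Fin n → ℝ := a • α₁ + b • α₂ with hα
  show α ⬝ᵥ A⁻¹ *ᵥ α ≤ a * (α₁ ⬝ᵥ A₁⁻¹ *ᵥ α₁) + b * (α₂ ⬝ᵥ A₂⁻¹ *ᵥ α₂)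
  set x : Fin n → ℝ := A⁻¹ *ᵥ α with hx
  have hAx : A *ᵥ x = α := by
    rw [hx, mulVec_mulVec, mul_nonsing_inv A hdS.det_pos.ne'.isUnit, one_mulVec]
  have hval : α ⬝ᵥ A⁻¹ *ᵥ α = 2 * (x ⬝ᵥ α) - x ⬝ᵥ A *ᵥ x := by
    rw [hAx, ← hx, dotProduct_comm]; ring
  have hsplit : 2 * (x ⬝ᵥ α) - x ⬝ᵥ A *ᵥ x
      = a * (2 * (x ⬝ᵥ α₁) - x ⬝ᵥ A₁ *ᵥ x) + b * (2 * (x ⬝ᵥ α₂) - x ⬝ᵥ A₂ *ᵥ x) := by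
    rw [hα, hA, dotProduct_add, dotProduct_smul, dotProduct_smul,
      add_mulVec, smul_mulVec, smul_mulVec, dotProduct_add,
      dotProduct_smul, dotProduct_smul]
    simp only [smul_eq_mul]; ring
  have h1 := key hs₁ hd₁ x α₁
  have h2 := key hs₂ hd₂ x α₂
  rw [hval, hsplit]
  have := add_le_add (mul_le_mul_of_nonneg_left h1 ha) (mul_le_mul_of_nonneg_left h2 hb)
  linarith
end

section
/- Let q be convex and differentiable on ℝ^m, and let a finite feasible set F ⊆ {0,1}^m be given. The outer approximation algorithm, which at iteration h solves min_{z∈F} max_{k≤h}[q(z⁽ᵏ⁾)+∇q(z⁽ᵏ⁾)^T(z−z⁽ᵏ⁾)] to obtain z⁽ʰ⁺¹⁾ and terminates when q(z⁽ʰ⁾) equals the current lower bound, terminates in finitely many iterations and returns a global minimizer of q over F. Specifically: if z⁽ʰ⁺¹⁾ = z⁽ᵏ⁾ for some k ≤ h, then z⁽ʰ⁺¹⁾ minimizes q over F. -/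
/-- Gradient inequality for a convex differentiable function. -/
lemma grad_ineq_aux {m : ℕ} (q : (Fin m → ℝ) → ℝ) (q' : (Fin m → ℝ) → ((Fin m → ℝ) →L[ℝ] ℝ))
    (hconv : ConvexOn ℝ Set.univ q) (hdiff : ∀ z, HasFDerivAt q (q' z) z)
    (x y : Fin m → ℝ) : q x + q' x (y - x) ≤ q y := by
  set g : ℝ → ℝ := fun t => q (x + t • (y - x)) with hg
  have hgconv : ConvexOn ℝ Set.univ g := by
    have := hconv.comp_affineMap (AffineMap.lineMap x y)
    simp only [Set.preimage_univ] at this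
    have he : g = q ∘ ⇑(AffineMap.lineMap x y) := by
      funext t
      have harg : x + t • (y - x) = AffineMap.lineMap x y t := by
        simp only [AffineMap.lineMap_apply, vadd_eq_add]
        abel
      simp only [hg, Function.comp_apply, harg]
    rw [he]; exact this
  have hA : HasDerivAt (fun t : ℝ => x + t • (y - x)) (y - x) 0 := by
    simpa using ((hasDerivAt_id (0:ℝ)).smul_const (y - x)).const_add x
  have hgd : HasDerivAt g (q' x (y - x)) 0 := by
    have := (hdiff (x + (0:ℝ) • (y - x))).comp_hasDerivAt 0 hA
    simp at this; rw [map_sub]; exact this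
  have := hgconv.le_slope_of_hasDerivAt (Set.mem_univ (0:ℝ)) (Set.mem_univ (1:ℝ))
    one_pos hgd
  have hs : slope g 0 1 = q y - q x := by
    simp [slope_def_field, hg]
  rw [hs] at this
  linarith

/-- The outer approximation algorithm over a finite binary feasible set terminates: some iterate
revisits a previous point, and any such revisited iterate is a global minimizer of `q` over `F`. -/
theorem stmt13 (m : ℕ) (q : (Fin m → ℝ) → ℝ) (q' : (Fin m → ℝ) → ((Fin m → ℝ) →L[ℝ] ℝ))
    (hconv : ConvexOn ℝ Set.univ q)
    (hdiff : ∀ z, HasFDerivAt q (q' z) z)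
    (F : Finset (Fin m → ℝ)) (hF : F.Nonempty)
    (hbin : ∀ z ∈ F, ∀ i, z i = 0 ∨ z i = 1)
    (zs : ℕ → (Fin m → ℝ)) (hmem : ∀ k, zs k ∈ F)
    (Q : ℕ → (Fin m → ℝ) → ℝ)
    (hQ : ∀ h z, Q h z = (Finset.range (h + 1)).sup' Finset.nonempty_range_add_one
      (fun k => q (zs k) + q' (zs k) (z - zs k)))
    (hmin : ∀ h, ∀ z ∈ F, Q h (zs (h + 1)) ≤ Q h z) :
    (∃ h k, k ≤ h ∧ zs (h + 1) = zs k) ∧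
    (∀ h k, k ≤ h → zs (h + 1) = zs k → ∀ z ∈ F, q (zs (h + 1)) ≤ q z) := by
  constructor
  · -- pigeonhole
    obtain ⟨a, ha, b, hb, hab, heq⟩ :=
      Finset.exists_ne_map_eq_of_card_lt_of_maps_to
        (s := Finset.range (F.card + 1)) (t := F)
        (by simp) (fun k _ => hmem k)
    rcases lt_or_gt_of_ne hab with h | h
    · obtain ⟨c, rfl⟩ := Nat.exists_eq_add_of_lt h
      exact ⟨a + c, a, Nat.le_add_right a c, heq.symm⟩
    · obtain ⟨c, rfl⟩ := Nat.exists_eq_add_of_lt h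
      exact ⟨b + c, b, Nat.le_add_right b c, heq⟩
  · intro h k hkh hrep z hz
    have h1 : q (zs (h + 1)) ≤ Q h (zs (h + 1)) := by
      rw [hQ]
      have hk : k ∈ Finset.range (h + 1) := Finset.mem_range.mpr (Nat.lt_succ_of_le hkh)
      calc q (zs (h + 1)) = q (zs k) + q' (zs k) (zs (h + 1) - zs k) := by
            rw [hrep]; simp
        _ ≤ _ := Finset.le_sup' (fun k => q (zs k) + q' (zs k) (zs (h + 1) - zs k)) hk
    have h2 : Q h (zs (h + 1)) ≤ Q h z := hmin h z hz
    have h3 : Q h z ≤ q z := by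
      rw [hQ]
      apply Finset.sup'_le
      intro k' _
      exact grad_ineq_aux q q' hconv hdiff (zs k') z
    linarith
end
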